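/- Let {Λ(t)} be a family of completely positive trace-nonincreasing maps on a finite-dimensional matrix algebra that is CP-divisible, i.e., for all t₂ ≥ t₁ ≥ 0 there exists a completely positive trace-nonincreasing map Θ(t₂,t₁) with Λ(t₂) = Θ(t₂,t₁) ∘ Λ(t₁). Then for any two density operators ρ₁, ρ₂, the quantity p_succ(t) = ¼( tr Λ(t)[ρ₁] + tr Λ(t)[ρ₂] + ‖Λ(t)[ρ₁] − Λ(t)[ρ₂]‖₁ ) is a nonincreasing function of t. -/

import Mathlib

open Matrix
open scoped ComplexOrder

/-- The trace norm `‖A‖₁ = tr √(AᴴA)` of a complex square matrix. -/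
noncomputable def traceNorm {n : Type*} [Fintype n] [DecidableEq n]
    (A : Matrix n n ℂ) : ℝ :=
  (((Matrix.posSemidef_conjTranspose_mul_self A).1.eigenvectorUnitary.1 *
      diagonal (((↑) : ℝ → ℂ) ∘ (√·) ∘ (Matrix.posSemidef_conjTranspose_mul_self A).1.eigenvalues) *
      (star (Matrix.posSemidef_conjTranspose_mul_self A).1.eigenvectorUnitary : Matrix n n ℂ)).trace).re

/-- The blockwise extension `Id_n ⊗ Λ` of a map on matrices. -/
def blockApply {d e : Type*} (n : ℕ) (Λ : Matrix d d ℂ → Matrix e e ℂ)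
    (M : Matrix (Fin n × d) (Fin n × d) ℂ) : Matrix (Fin n × e) (Fin n × e) ℂ :=
  fun p q => Λ (Matrix.of fun a b => M (p.1, a) (q.1, b)) p.2 q.2

/-- `Λ` is completely positive: `Id_n ⊗ Λ` maps positive semidefinite matrices to
positive semidefinite matrices, for every `n`. -/
def IsCompletelyPositive {d e : Type*} [Fintype d] [Fintype e]
    (Λ : Matrix d d ℂ → Matrix e e ℂ) : Prop :=
  ∀ (n : ℕ) (M : Matrix (Fin n × d) (Fin n × d) ℂ),
    M.PosSemidef → (blockApply n Λ M).PosSemidef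

/-- `Λ` is trace nonincreasing: `tr Λ[ρ] ≤ tr ρ` for every positive semidefinite `ρ`. -/
def IsTraceNonincreasing {d e : Type*} [Fintype d] [Fintype e]
    (Λ : Matrix d d ℂ → Matrix e e ℂ) : Prop :=
  ∀ ρ : Matrix d d ℂ, ρ.PosSemidef → (Λ ρ).trace.re ≤ ρ.trace.re

/-! By CP-divisibility, `Λ(t₂)[ρᵢ] = Θ[Λ(t₁)[ρᵢ]]` with `Θ` positive and trace nonincreasing,
so it suffices that such a `Θ` does not increase the trace norm of a Hermitian `H`. Writing
`H = H⁺ - H⁻`, we have `‖H‖₁ = tr H⁺ + tr H⁻`, and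
`‖Θ H‖₁ = ‖Θ H⁺ - Θ H⁻‖₁ ≤ tr Θ H⁺ + tr Θ H⁻ ≤ tr H⁺ + tr H⁻`,
using `‖P - Q‖₁ ≤ tr P + tr Q` for positive semidefinite `P`, `Q`. -/

section

variable {d e : Type*} [Fintype d] [Fintype e]

theorem IsCompletelyPositive.posSemidef_map {Λ : Matrix d d ℂ → Matrix e e ℂ}
    (hΛ : IsCompletelyPositive Λ) {ρ : Matrix d d ℂ} (hρ : ρ.PosSemidef) : (Λ ρ).PosSemidef := by
  have hblock := hΛ 1 (ρ.submatrix Prod.snd Prod.snd) (hρ.submatrix _)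
  exact hblock.submatrix (fun i : e => ((0 : Fin 1), i))

variable [DecidableEq d]

open scoped MatrixOrder

lemma Matrix.IsHermitian.trace_cfc {𝕜 : Type*} [RCLike 𝕜] {A : Matrix d d 𝕜}
    (hA : A.IsHermitian) (f : ℝ → ℝ) : (cfc f A).trace = ∑ i, (f (hA.eigenvalues i) : 𝕜) := by
  rw [hA.cfc_eq, IsHermitian.cfc, Unitary.conjStarAlgAut_apply, trace_mul_cycle,
    Unitary.coe_star_mul_self, one_mul, trace_diagonal]
  rfl

lemma traceNorm_eq_trace_abs (A : Matrix d d ℂ) : traceNorm A = (CFC.abs A).trace.re := by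
  have h0 : (0 : Matrix d d ℂ) ≤ Aᴴ * A := (posSemidef_conjTranspose_mul_self A).nonneg
  rw [CFC.abs, star_eq_conjTranspose, CFC.sqrt_eq_cfc, cfc_nnreal_eq_real _ _ h0,
    (posSemidef_conjTranspose_mul_self A).1.cfc_eq,
    IsHermitian.cfc, Unitary.conjStarAlgAut_apply, traceNorm]
  congr 4
  funext i j
  simp [diagonal_apply, Real.coe_sqrt,
    max_eq_left ((posSemidef_conjTranspose_mul_self A).eigenvalues_nonneg i)]

lemma Matrix.IsHermitian.traceNorm_eq_sum_abs_eigenvalues {H : Matrix d d ℂ}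
    (hH : H.IsHermitian) : traceNorm H = ∑ i, |hH.eigenvalues i| := by
  rw [traceNorm_eq_trace_abs, CFC.abs_eq_cfc_norm H hH.isSelfAdjoint, hH.trace_cfc,
    Complex.re_sum]
  simp

lemma Matrix.IsHermitian.traceNorm_eq_trace_posPart_add_negPart {H : Matrix d d ℂ}
    (hH : H.IsHermitian) : traceNorm H = (H⁺).trace.re + (H⁻).trace.re := by
  rw [traceNorm_eq_trace_abs, ← CFC.posPart_add_negPart H hH.isSelfAdjoint, trace_add,
    Complex.add_re]

lemma Matrix.PosSemidef.traceNorm_sub_le {P Q : Matrix d d ℂ} (hP : P.PosSemidef)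
    (hQ : Q.PosSemidef) : traceNorm (P - Q) ≤ P.trace.re + Q.trace.re := by
  have hH := hP.1.sub hQ.1
  set U : Matrix d d ℂ := ↑hH.eigenvectorUnitary
  have hP' : (star U * P * U).PosSemidef := hP.conjTranspose_mul_mul_same U
  have hQ' : (star U * Q * U).PosSemidef := hQ.conjTranspose_mul_mul_same U
  have htrace (A : Matrix d d ℂ) : (star U * A * U).trace = A.trace := by
    rw [trace_mul_cycle, mem_unitaryGroup_iff.mp hH.eigenvectorUnitary.2, one_mul]
  -- in the eigenbasis of `P - Q` its eigenvalues are differences of nonnegative diagonal entries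
  have hdiag (i : d) :
      hH.eigenvalues i = ((star U * P * U) i i).re - ((star U * Q * U) i i).re := by
    have h := congrFun₂ hH.conjStarAlgAut_star_eigenvectorUnitary i i
    rw [Unitary.conjStarAlgAut_star_apply, Matrix.mul_sub, Matrix.sub_mul] at h
    simpa using congrArg Complex.re h.symm
  calc traceNorm (P - Q) = ∑ i, |hH.eigenvalues i| := hH.traceNorm_eq_sum_abs_eigenvalues
    _ ≤ ∑ i, (((star U * P * U) i i).re + ((star U * Q * U) i i).re) := by
        refine Finset.sum_le_sum fun i _ => ?_
        have hp := Complex.nonneg_iff.1 (hP'.diag_nonneg (i := i))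
        have hq := Complex.nonneg_iff.1 (hQ'.diag_nonneg (i := i))
        rw [hdiag, abs_sub_le_iff]
        constructor <;> linarith [hp.1, hq.1]
    _ = P.trace.re + Q.trace.re := by
        simp only [Finset.sum_add_distrib, ← Complex.re_sum, ← htrace P, ← htrace Q]
        rfl

theorem traceNorm_map_le [DecidableEq e] (Θ : Matrix d d ℂ →ₗ[ℂ] Matrix e e ℂ)
    (hpos : ∀ ρ, ρ.PosSemidef → (Θ ρ).PosSemidef) (hTNI : IsTraceNonincreasing Θ)
    {H : Matrix d d ℂ} (hH : H.IsHermitian) : traceNorm (Θ H) ≤ traceNorm H := by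
  have hP : (H⁺).PosSemidef := nonneg_iff_posSemidef.mp (CFC.posPart_nonneg H)
  have hN : (H⁻).PosSemidef := nonneg_iff_posSemidef.mp (CFC.negPart_nonneg H)
  calc traceNorm (Θ H) = traceNorm (Θ H⁺ - Θ H⁻) := by
        rw [← map_sub, CFC.posPart_sub_negPart H hH.isSelfAdjoint]
    _ ≤ (Θ H⁺).trace.re + (Θ H⁻).trace.re := (hpos _ hP).traceNorm_sub_le (hpos _ hN)
    _ ≤ (H⁺).trace.re + (H⁻).trace.re := add_le_add (hTNI _ hP) (hTNI _ hN)
    _ = traceNorm H := hH.traceNorm_eq_trace_posPart_add_negPart.symm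

end

theorem stmt6_general {d : Type*} [Fintype d] [DecidableEq d]
    (Λ : ℝ → (Matrix d d ℂ →ₗ[ℂ] Matrix d d ℂ))
    (hCP : ∀ t, 0 ≤ t → IsCompletelyPositive (⇑(Λ t)))
    (hdiv : ∀ t₁ t₂ : ℝ, 0 ≤ t₁ → t₁ ≤ t₂ →
      ∃ Θ : Matrix d d ℂ →ₗ[ℂ] Matrix d d ℂ,
        IsCompletelyPositive (⇑Θ) ∧ IsTraceNonincreasing (⇑Θ) ∧ Λ t₂ = Θ ∘ₗ Λ t₁)
    (ρ₁ ρ₂ : Matrix d d ℂ)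
    (hρ₁ : ρ₁.PosSemidef)
    (hρ₂ : ρ₂.PosSemidef) :
    AntitoneOn (fun t : ℝ =>
        (1/4 : ℝ) * ((Λ t ρ₁).trace.re + (Λ t ρ₂).trace.re
          + traceNorm (Λ t ρ₁ - Λ t ρ₂)))
      (Set.Ici (0 : ℝ)) := by
  intro t₁ ht₁ t₂ _ ht
  obtain ⟨Θ, hΘCP, hΘTNI, hΛ⟩ := hdiv t₁ t₂ ht₁ ht
  have hσ₁ := (hCP t₁ ht₁).posSemidef_map hρ₁
  have hσ₂ := (hCP t₁ ht₁).posSemidef_map hρ₂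
  have hnorm : traceNorm (Θ (Λ t₁ ρ₁) - Θ (Λ t₁ ρ₂)) ≤ traceNorm (Λ t₁ ρ₁ - Λ t₁ ρ₂) := by
    rw [← map_sub]
    exact traceNorm_map_le Θ (fun _ => hΘCP.posSemidef_map) hΘTNI (hσ₁.1.sub hσ₂.1)
  simp only [hΛ, LinearMap.comp_apply]
  linarith [hΘTNI _ hσ₁, hΘTNI _ hσ₂]

/-- For a CP-divisible family of completely positive trace-nonincreasing maps, the
success probability
`p_succ(t) = ¼(tr Λ(t)[ρ₁] + tr Λ(t)[ρ₂] + ‖Λ(t)[ρ₁] − Λ(t)[ρ₂]‖₁)` is a nonincreasing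
function of `t` for any two density operators `ρ₁, ρ₂`. -/
theorem stmt6 {d : Type*} [Fintype d] [DecidableEq d]
    (Λ : ℝ → (Matrix d d ℂ →ₗ[ℂ] Matrix d d ℂ))
    (hCP : ∀ t, 0 ≤ t → IsCompletelyPositive (⇑(Λ t)))
    (hTNI : ∀ t, 0 ≤ t → IsTraceNonincreasing (⇑(Λ t)))
    (hdiv : ∀ t₁ t₂ : ℝ, 0 ≤ t₁ → t₁ ≤ t₂ →
      ∃ Θ : Matrix d d ℂ →ₗ[ℂ] Matrix d d ℂ,
        IsCompletelyPositive (⇑Θ) ∧ IsTraceNonincreasing (⇑Θ) ∧ Λ t₂ = Θ ∘ₗ Λ t₁)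
    (ρ₁ ρ₂ : Matrix d d ℂ)
    (hρ₁ : ρ₁.PosSemidef) (htr₁ : ρ₁.trace = 1)
    (hρ₂ : ρ₂.PosSemidef) (htr₂ : ρ₂.trace = 1) :
    AntitoneOn (fun t : ℝ =>
        (1/4 : ℝ) * ((Λ t ρ₁).trace.re + (Λ t ρ₂).trace.re
          + traceNorm (Λ t ρ₁ - Λ t ρ₂)))
      (Set.Ici (0 : ℝ)) :=
  stmt6_general Λ hCP hdiv ρ₁ ρ₂ hρ₁ hρ₂
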